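/- arXiv:2202.06561 — 2 statements merged into one kernel-verified Lean document; each statement's English description precedes it below -/
import Mathlib

section
/- An integer β is an essential value of the integer-valued supermodular function p if and only if there exists a critical value λ (a real number at which the family of maximizers of p(X) − λ|X| has at least two members) satisfying β ≥ λ > β − 1. Consequently, the essential values are exactly the distinct members of the rounded-up critical values ⌈λ₁⌉ ≥ ⌈λ₂⌉ ≥ ⋯ ≥ ⌈λ_r⌉. -/
/-!
Supermodularity forces every maximizer of `p(X) − λ|X|` to be contained in every maximizer
for a smaller `λ`, so `λ ↦ L(λ)` is antitone. If `L(b) ⊊ L(b − 1) = A`, then `A` stays a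
maximizer up to the least crossing point `(p(A) − p(C)) / (|A| − |C|)` over the sets `C`
with `|C| < |A|`; there `A` ties with a minimizing `C`, and this crossing point lies in
`(b − 1, b]`. Conversely, two maximizers `X ≠ Y` at a critical `λ ∈ (b − 1, b]` give
`L(b) ⊆ X ∩ Y ⊊ X ∪ Y ⊆ L(b − 1)`.
-/

open Finset

variable {α : Type*} [Fintype α] [DecidableEq α]

def Supermodular (p : Finset α → EReal) : Prop :=
  ∀ X Y : Finset α, p X + p Y ≤ p (X ∩ Y) + p (X ∪ Y)

/-- `p` takes values in `ℤ ∪ {−∞}`. -/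
def IntegerValued (p : Finset α → EReal) : Prop :=
  ∀ X : Finset α, p X = ⊥ ∨ ∃ n : ℤ, p X = ((n : ℝ) : EReal)

/-- `X` maximizes `Z ↦ p(Z) − λ|Z|` over all subsets `Z` of the ground-set. -/
def IsMaximizer (p : Finset α → EReal) (lam : ℝ) (X : Finset α) : Prop :=
  ∀ Y : Finset α,
    p Y - ((lam * (Y.card : ℝ) : ℝ) : EReal) ≤ p X - ((lam * (X.card : ℝ) : ℝ) : EReal)

/-- `L` assigns to each real `λ` the smallest maximizer of `X ↦ p(X) − λ|X|`. -/
def SmallestMaximizerFun (p : Finset α → EReal) (L : ℝ → Finset α) : Prop :=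
  ∀ lam : ℝ, IsMaximizer p lam (L lam) ∧ ∀ X : Finset α, IsMaximizer p lam X → L lam ⊆ X

/-- `λ` is a critical value: the family of maximizers of `p(X) − λ|X|` has at
least two members. -/
def IsCriticalValue (p : Finset α → EReal) (lam : ℝ) : Prop :=
  ∃ X Y : Finset α, X ≠ Y ∧ IsMaximizer p lam X ∧ IsMaximizer p lam Y

section

variable {α : Type*} {p : Finset α → EReal} {lam lam' : ℝ} {X Y : Finset α}

lemma IntegerValued.ne_top (hint : IntegerValued p) (X : Finset α) : p X ≠ ⊤ := by
  rcases hint X with h | ⟨n, h⟩ <;> simp [h]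

lemma IsMaximizer.ne_bot (hY : p Y ≠ ⊥) (hX : IsMaximizer p lam X) : p X ≠ ⊥ := by
  intro h
  have := hX Y
  rw [h, EReal.bot_sub, le_bot_iff, sub_eq_add_neg, EReal.add_eq_bot_iff] at this
  rcases this with hY' | hneg
  · exact hY hY'
  · exact EReal.coe_ne_top _ (EReal.neg_eq_bot_iff.1 hneg)

lemma isMaximizer_iff_of_ne_bot (htop : ∀ Z, p Z ≠ ⊤) (hX : p X ≠ ⊥) :
    IsMaximizer p lam X ↔
      ∀ Y, p Y ≠ ⊥ → (p Y).toReal - lam * #Y ≤ (p X).toReal - lam * #X := by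
  have coe_sub : ∀ Z, p Z ≠ ⊥ →
      p Z - ((lam * #Z : ℝ) : EReal) = (((p Z).toReal - lam * #Z : ℝ) : EReal) :=
    fun Z hZ => by rw [EReal.coe_sub, EReal.coe_toReal (htop Z) hZ]
  refine forall_congr' fun Y => ?_
  by_cases hY : p Y = ⊥
  · simp [hY]
  · rw [coe_sub Y hY, coe_sub X hX, EReal.coe_le_coe_iff]
    simp [hY]

/-- The `λ` at which `A` and `C` have the same value of `p(·) − λ|·|`. -/
noncomputable def crossing (p : Finset α → EReal) (A C : Finset α) : ℝ :=
  ((p A).toReal - (p C).toReal) / (#A - #C)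

lemma le_crossing_iff {A C : Finset α} (h : #C < #A) :
    lam ≤ crossing p A C ↔ (p C).toReal - lam * #C ≤ (p A).toReal - lam * #A := by
  have hpos : (0 : ℝ) < #A - #C := sub_pos.2 (by exact_mod_cast h)
  rw [crossing, le_div_iff₀ hpos]
  constructor <;> intro <;> linarith

lemma crossing_le_iff {A C : Finset α} (h : #C < #A) :
    crossing p A C ≤ lam ↔ (p A).toReal - lam * #A ≤ (p C).toReal - lam * #C := by
  have hpos : (0 : ℝ) < #A - #C := sub_pos.2 (by exact_mod_cast h)
  rw [crossing, div_le_iff₀ hpos]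
  constructor <;> intro <;> linarith

lemma IsMaximizer.of_toReal_le (htop : ∀ Z, p Z ≠ ⊤) (hX : IsMaximizer p lam X)
    (hY : p Y ≠ ⊥) (h : (p X).toReal - lam * #X ≤ (p Y).toReal - lam * #Y) :
    IsMaximizer p lam Y :=
  (isMaximizer_iff_of_ne_bot htop hY).2 fun Z hZ =>
    ((isMaximizer_iff_of_ne_bot htop (hX.ne_bot hY)).1 hX Z hZ).trans h

lemma IsMaximizer.of_le_crossing (htop : ∀ Z, p Z ≠ ⊤) (hfin : ∃ Z, p Z ≠ ⊥)
    {A : Finset α} (hA : IsMaximizer p lam' A) (hle : lam' ≤ lam)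
    (hcross : ∀ C, p C ≠ ⊥ → #C < #A → lam ≤ crossing p A C) : IsMaximizer p lam A := by
  have hAb := hA.ne_bot hfin.choose_spec
  rw [isMaximizer_iff_of_ne_bot htop hAb] at hA ⊢
  intro C hC
  rcases lt_or_ge #C #A with hlt | hge
  · exact (le_crossing_iff hlt).1 (hcross C hC hlt)
  · have hCA := hA C hC
    have hcard : (#A : ℝ) ≤ #C := by exact_mod_cast hge
    nlinarith

lemma exists_isCriticalValue_of_card_lt [Fintype α] (htop : ∀ Z, p Z ≠ ⊤)
    (hfin : ∃ Z, p Z ≠ ⊥) {A B : Finset α} (hA : IsMaximizer p lam' A)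
    (hAmin : ∀ X, IsMaximizer p lam' X → A ⊆ X) (hB : IsMaximizer p lam B) (hBA : #B < #A) :
    ∃ μ, (lam' < μ ∧ μ ≤ lam) ∧ IsCriticalValue p μ := by
  have hAb := hA.ne_bot hfin.choose_spec
  have hBb := hB.ne_bot hfin.choose_spec
  obtain ⟨C, hCS, hCmin⟩ := (univ.filter fun C => p C ≠ ⊥ ∧ #C < #A).exists_min_image
    (crossing p A) ⟨B, by simp [hBb, hBA]⟩
  simp only [mem_filter, mem_univ, true_and, and_imp] at hCS hCmin
  obtain ⟨hCb, hCA⟩ := hCS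
  have hle : lam' ≤ crossing p A C :=
    (le_crossing_iff hCA).2 ((isMaximizer_iff_of_ne_bot htop hAb).1 hA C hCb)
  have hAμ : IsMaximizer p (crossing p A C) A := hA.of_le_crossing htop hfin hle hCmin
  have hCμ : IsMaximizer p (crossing p A C) C :=
    hAμ.of_toReal_le htop hCb ((crossing_le_iff hCA).1 le_rfl)
  refine ⟨crossing p A C, ⟨hle.lt_of_ne ?_, ?_⟩, C, A, ?_, hCμ, hAμ⟩
  · rintro heq
    rw [← heq] at hCμ
    exact (card_le_card (hAmin C hCμ)).not_gt hCA
  · exact (hCmin B hBb hBA).trans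
      ((crossing_le_iff hBA).2 ((isMaximizer_iff_of_ne_bot htop hBb).1 hB A hAb))
  · rintro rfl
    exact hCA.false

variable [DecidableEq α]

lemma Supermodular.toReal_add_le (hsup : Supermodular p) (htop : ∀ Z, p Z ≠ ⊤)
    (hX : p X ≠ ⊥) (hY : p Y ≠ ⊥) :
    p (X ∩ Y) ≠ ⊥ ∧ p (X ∪ Y) ≠ ⊥ ∧
      (p X).toReal + (p Y).toReal ≤ (p (X ∩ Y)).toReal + (p (X ∪ Y)).toReal := by
  have hs := hsup X Y
  obtain ⟨hI, hU⟩ : p (X ∩ Y) ≠ ⊥ ∧ p (X ∪ Y) ≠ ⊥ :=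
    EReal.add_ne_bot_iff.1 (ne_bot_of_le_ne_bot (EReal.add_ne_bot_iff.2 ⟨hX, hY⟩) hs)
  refine ⟨hI, hU, ?_⟩
  rw [← EReal.coe_toReal (htop X) hX, ← EReal.coe_toReal (htop Y) hY,
    ← EReal.coe_toReal (htop _) hI, ← EReal.coe_toReal (htop _) hU] at hs
  exact_mod_cast hs

lemma IsMaximizer.subset_of_lt (hsup : Supermodular p) (htop : ∀ Z, p Z ≠ ⊤)
    (hfin : ∃ Z, p Z ≠ ⊥) (hlt : lam' < lam) (hX : IsMaximizer p lam X)
    (hY : IsMaximizer p lam' Y) : X ⊆ Y := by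
  obtain ⟨Z, hZ⟩ := hfin
  have hXb := hX.ne_bot hZ
  have hYb := hY.ne_bot hZ
  obtain ⟨hI, hU, hsum⟩ := hsup.toReal_add_le htop hXb hYb
  have hXI := (isMaximizer_iff_of_ne_bot htop hXb).1 hX _ hI
  have hYU := (isMaximizer_iff_of_ne_bot htop hYb).1 hY _ hU
  have hcard : (#(X ∩ Y) : ℝ) + #(X ∪ Y) = #X + #Y := by
    exact_mod_cast card_inter_add_card_union X Y
  have key : (lam - lam') * (#X - #(X ∩ Y)) ≤ 0 := by
    linear_combination hXI + hYU + hsum + lam' * hcard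
  have hle : (#X : ℝ) ≤ #(X ∩ Y) :=
    sub_nonpos.1 (nonpos_of_mul_nonpos_right key (sub_pos.2 hlt))
  exact inter_eq_left.1 (eq_of_subset_of_card_le inter_subset_left (by exact_mod_cast hle))

namespace SmallestMaximizerFun

variable {L : ℝ → Finset α}

lemma subset_of_le (hL : SmallestMaximizerFun p L) (hsup : Supermodular p)
    (htop : ∀ Z, p Z ≠ ⊤) (hfin : ∃ Z, p Z ≠ ⊥) (hle : lam' ≤ lam)
    (hX : IsMaximizer p lam' X) : L lam ⊆ X := by
  rcases hle.lt_or_eq with hlt | rfl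
  · exact (hL lam).1.subset_of_lt hsup htop hfin hlt hX
  · exact (hL _).2 X hX

lemma exists_isCriticalValue_of_ne [Fintype α] (hL : SmallestMaximizerFun p L)
    (hsup : Supermodular p) (htop : ∀ Z, p Z ≠ ⊤) (hfin : ∃ Z, p Z ≠ ⊥) (hlt : lam' < lam)
    (hne : L lam ≠ L lam') :
    ∃ μ, (lam' < μ ∧ μ ≤ lam) ∧ IsCriticalValue p μ :=
  exists_isCriticalValue_of_card_lt htop hfin (hL lam').1 (hL lam').2 (hL lam).1 <|
    card_lt_card (((hL lam).1.subset_of_lt hsup htop hfin hlt (hL lam').1).ssubset_of_ne hne)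

lemma ne_of_isCriticalValue (hL : SmallestMaximizerFun p L) (hsup : Supermodular p)
    (htop : ∀ Z, p Z ≠ ⊤) (hfin : ∃ Z, p Z ≠ ⊥) {μ : ℝ} (hlt : lam' < μ) (hle : μ ≤ lam)
    (hμ : IsCriticalValue p μ) : L lam ≠ L lam' := by
  obtain ⟨X, Y, hXY, hX, hY⟩ := hμ
  have squeeze : ∀ Z, IsMaximizer p μ Z → L lam ⊆ Z ∧ Z ⊆ L lam' := fun Z hZ =>
    ⟨hL.subset_of_le hsup htop hfin hle hZ, hZ.subset_of_lt hsup htop hfin hlt (hL lam').1⟩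
  intro heq
  obtain ⟨hLX, hXL⟩ := squeeze X hX
  obtain ⟨hLY, hYL⟩ := squeeze Y hY
  rw [heq] at hLX hLY
  exact hXY ((hXL.antisymm hLX).trans (hYL.antisymm hLY).symm)

end SmallestMaximizerFun

end

theorem essential_iff_ceil_of_critical_general (p : Finset α → EReal)
    (hfin : p (Finset.univ : Finset α) ≠ ⊥) (hsup : Supermodular p)
    (hint : IntegerValued p) (L : ℝ → Finset α) (hL : SmallestMaximizerFun p L) :
    ∀ b : ℤ, L (b : ℝ) ≠ L ((b : ℝ) - 1) ↔
      ∃ lam : ℝ, ((b : ℝ) - 1 < lam ∧ lam ≤ (b : ℝ)) ∧ IsCriticalValue p lam := by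
  intro b
  have hfin' : ∃ Z, p Z ≠ ⊥ := ⟨univ, hfin⟩
  constructor
  · exact hL.exists_isCriticalValue_of_ne hsup hint.ne_top hfin' (sub_one_lt _)
  · rintro ⟨μ, ⟨hlt, hle⟩, hμ⟩
    exact hL.ne_of_isCriticalValue hsup hint.ne_top hfin' hlt hle hμ

/-- An integer `b` is an essential value (i.e. `L(b) ≠ L(b−1)`) iff there exists a
critical value `λ` with `b ≥ λ > b − 1`, i.e. `⌈λ⌉ = b`; hence the essential values
are exactly the distinct rounded-up critical values. -/
theorem essential_iff_ceil_of_critical (p : Finset α → EReal) (hp0 : p ∅ = 0)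
    (hfin : p (Finset.univ : Finset α) ≠ ⊥) (hsup : Supermodular p)
    (hint : IntegerValued p) (L : ℝ → Finset α) (hL : SmallestMaximizerFun p L) :
    ∀ b : ℤ, L (b : ℝ) ≠ L ((b : ℝ) - 1) ↔
      ∃ lam : ℝ, ((b : ℝ) - 1 < lam ∧ lam ≤ (b : ℝ)) ∧ IsCriticalValue p lam :=
  essential_iff_ceil_of_critical_general p hfin hsup hint L hL
end

section
/- Let B be an integral base-polyhedron with unique decreasingly minimal element m_ℝ (the minimum norm point of B). Then every decreasingly minimal element m_ℤ of the M-convex set B ∩ ℤ^S satisfies ⌊m_ℝ⌋ ≤ m_ℤ ≤ ⌈m_ℝ⌉ componentwise. -/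
open Finset

variable {α : Type*} [Fintype α] [DecidableEq α]

/-- `x` belongs to the base-polyhedron `B'(p)`:
`x(S) = p(S)` and `x(Z) ≥ p(Z)` for every `Z ⊆ S`. -/
def memB (p : Finset α → EReal) (x : α → ℝ) : Prop :=
  ((∑ s, x s : ℝ) : EReal) = p Finset.univ ∧
    ∀ Z : Finset α, p Z ≤ ((∑ s ∈ Z, x s : ℝ) : EReal)

/-- `x` is an integral element of the base-polyhedron `B'(p)` (a member of the
M-convex set `B ∩ ℤ^S`). -/
def memBZ (p : Finset α → EReal) (x : α → ℤ) : Prop :=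
  ((((∑ s, x s : ℤ) : ℝ)) : EReal) = p Finset.univ ∧
    ∀ Z : Finset α, p Z ≤ ((((∑ s ∈ Z, x s : ℤ) : ℝ)) : EReal)

/-- Lexicographic comparison `l1 ≤_lex l2` of lists. -/
def lexLE {β : Type*} [LT β] (l1 l2 : List β) : Prop :=
  l1 = l2 ∨ List.Lex (· < ·) l1 l2

/-- The components of `x` sorted in decreasing order. -/
noncomputable def sortDescR (x : α → ℝ) : List ℝ :=
  (Multiset.sort (Finset.univ.val.map x) (· ≤ ·)).reverse

/-- The components of the integral vector `x` sorted in decreasing order. -/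
def sortDescZ (x : α → ℤ) : List ℤ :=
  (Multiset.sort (Finset.univ.val.map x) (· ≤ ·)).reverse

/-- `m` is a decreasingly minimal element of the base-polyhedron `B'(p)`. -/
def DecMinR (p : Finset α → EReal) (m : α → ℝ) : Prop :=
  memB p m ∧ ∀ y : α → ℝ, memB p y → lexLE (sortDescR m) (sortDescR y)

/-- `m` is a decreasingly minimal element of the M-convex set `B'(p) ∩ ℤ^S`. -/
def DecMinZ (p : Finset α → EReal) (m : α → ℤ) : Prop :=
  memBZ p m ∧ ∀ y : α → ℤ, memBZ p y → lexLE (sortDescZ m) (sortDescZ y)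

/-!
For `x ∈ B` call `Z` tight if `x(Z) = p(Z)`. By supermodularity tight sets are closed
under `∩` and `∪`, so each `s` lies in a smallest tight set `T(x; s)`, and when
`t ∈ T(x; s)` a small amount (a unit, if `x` and `p` are integral) can be moved from `s`
to `t` without leaving `B`. Decreasing minimality thus gives `m_ℝ(s) ≤ m_ℝ(t)` and
`m_ℤ(s) - 1 ≤ m_ℤ(t)` for `t ∈ T(·; s)`; hence the upper level sets of `m_ℝ` are tight,
and so is the union of the `T(m_ℤ; t)` over the `t` with `m_ℤ(t) > ⌊m_ℝ(s)⌋`.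
Finally, if `X` is tight for `u ∈ B` and `Y` is tight for `w ∈ B`, supermodularity gives
`u(X \ Y) ≤ w(X \ Y)`. Taking for `X`, `Y` a level set of `m_ℝ` and one of the above
tight sets of `m_ℤ` rules out both `m_ℤ(s) < ⌊m_ℝ(s)⌋` and `m_ℤ(s) > ⌈m_ℝ(s)⌉`.
-/

open Filter Topology

section SortedLex

variable {β : Type*} [LinearOrder β]

theorem lexLE_iff_le (l₁ l₂ : List β) : lexLE l₁ l₂ ↔ l₁ ≤ l₂ :=
  le_iff_eq_or_lt.symm

theorem List.lt_of_count_lt {l₁ l₂ : List β} (h₁ : l₁.Pairwise (· ≥ ·))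
    (h₂ : l₂.Pairwise (· ≥ ·)) {v : β} (hv : l₂.count v < l₁.count v)
    (habove : ∀ w, v < w → l₂.count w = l₁.count w) : l₂ < l₁ := by
  induction l₁ generalizing l₂ with
  | nil => simp at hv
  | cons a t₁ ih =>
    obtain _ | ⟨b, t₂⟩ := l₂
    · exact List.nil_lt_cons ..
    have le_head : ∀ c ∈ a :: t₁, c ≤ a := fun c hc =>
      (List.mem_cons.1 hc).elim le_of_eq (List.rel_of_pairwise_cons h₁)
    have hva : v ≤ a := le_head v (List.count_pos_iff.1 (by omega))
    have hba : b ≤ a := by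
      by_contra! hab
      have hb : 0 < (b :: t₂).count b := List.count_pos_iff.2 List.mem_cons_self
      exact (le_head b (List.count_pos_iff.1 (habove b (hva.trans_lt hab) ▸ hb))).not_gt hab
    obtain hlt | rfl := hba.lt_or_eq
    · exact List.Lex.rel hlt
    refine List.Lex.cons (ih (List.pairwise_cons.1 h₁).2 (List.pairwise_cons.1 h₂).2 ?_ ?_)
    · simp only [List.count_cons] at hv
      omega
    · intro w hw
      have := habove w hw
      simp only [List.count_cons] at this
      omega

theorem sort_reverse_lt_of_count_lt {M N : Multiset β} {v : β} (hv : N.count v < M.count v)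
    (habove : ∀ w, v < w → N.count w = M.count w) :
    (N.sort (· ≤ ·)).reverse < (M.sort (· ≤ ·)).reverse := by
  have sorted (K : Multiset β) : (K.sort (· ≤ ·)).reverse.Pairwise (· ≥ ·) := by
    simp [List.pairwise_reverse]
  have count (K : Multiset β) (w : β) : (K.sort (· ≤ ·)).reverse.count w = K.count w := by
    rw [List.count_reverse, ← Multiset.coe_count, Multiset.sort_eq]
  exact List.lt_of_count_lt (sorted M) (sorted N) (v := v) (by simpa only [count] using hv)
    (by simpa only [count] using habove)

theorem sort_map_reverse_lt_of_exchange {ι : Type*} [Fintype ι] {x y : ι → β} {s t : ι}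
    (hys : y s < x s) (hyt : y t < x s) (hxt : x t < x s)
    (hother : ∀ u, u ≠ s → u ≠ t → y u = x u) :
    ((Finset.univ.val.map y).sort (· ≤ ·)).reverse <
      ((Finset.univ.val.map x).sort (· ≤ ·)).reverse := by
  have count (z : ι → β) (w : β) : (Finset.univ.val.map z).count w = #{u | w = z u} := by
    rw [Multiset.count_map, ← Finset.filter_val]
    rfl
  refine sort_reverse_lt_of_count_lt (v := x s) ?_ fun w hw => ?_
  · rw [count, count]
    refine Finset.card_lt_card ((Finset.ssubset_iff_of_subset fun u hu => ?_).2
      ⟨s, by simp, by simp [hys.ne']⟩)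
    simp only [Finset.mem_filter, Finset.mem_univ, true_and] at hu ⊢
    rw [hu, hother u (by rintro rfl; exact hys.ne' hu) (by rintro rfl; exact hyt.ne' hu)]
  · rw [count, count]
    refine congrArg _ (Finset.filter_congr fun u _ => ?_)
    by_cases hus : u = s
    · subst hus
      exact iff_of_false (hys.trans hw).ne' hw.ne'
    by_cases hut : u = t
    · subst hut
      exact iff_of_false (hyt.trans hw).ne' (hxt.trans hw).ne'
    rw [hother u hus hut]

end SortedLex

theorem EReal.eq_coe_and_eq_coe_of_coe_add_le {a b : EReal} {c d : ℝ} (ha : a ≤ c)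
    (hb : b ≤ d) (h : ((c + d : ℝ) : EReal) ≤ a + b) : a = c ∧ b = d := by
  induction a using EReal.rec <;> induction b using EReal.rec <;> simp_all
  norm_cast at *
  constructor <;> linarith

theorem sum_sub_single_add_single {ι G : Type*} [DecidableEq ι] [AddCommGroup G]
    (x : ι → G) (s t : ι) (a : G) (Z : Finset ι) :
    ∑ u ∈ Z, (x - Pi.single s a + Pi.single t a : ι → G) u =
      ∑ u ∈ Z, x u - (if s ∈ Z then a else 0) + (if t ∈ Z then a else 0) := by
  simp [Finset.sum_add_distrib, Finset.sum_sub_distrib, Finset.sum_pi_single']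

theorem memBZ_iff_memB_cast {ι : Type*} [Fintype ι] {p : Finset ι → EReal} {x : ι → ℤ} :
    memBZ p x ↔ memB p (fun u => (x u : ℝ)) := by
  simp [memBZ, memB]

section BasePolyhedron

def IsTight (p : Finset α → EReal) (x : α → ℝ) (Z : Finset α) : Prop :=
  p Z = ((∑ u ∈ Z, x u : ℝ) : EReal)

variable {p : Finset α → EReal}

theorem memB_exchange {x : α → ℝ} (hx : memB p x) {s t : α} {δ : ℝ} (hδ : 0 ≤ δ)
    (hslack : ∀ Z : Finset α, s ∈ Z → t ∉ Z → p Z ≤ ((∑ u ∈ Z, x u - δ : ℝ) : EReal)) :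
    memB p (x - Pi.single s δ + Pi.single t δ) := by
  refine ⟨?_, fun Z => ?_⟩ <;> rw [sum_sub_single_add_single]
  · simpa using hx.1
  split_ifs with hs ht ht
  · simpa using hx.2 Z
  · simpa using hslack Z hs ht
  · exact (hx.2 Z).trans (EReal.coe_le_coe_iff.2 (by linarith))
  · simpa using hx.2 Z

theorem memB_exchange_eventually {x : α → ℝ} (hx : memB p x) {s t : α}
    (htight : ∀ Z, IsTight p x Z → s ∈ Z → t ∈ Z) :
    ∀ᶠ δ in 𝓝[>] (0 : ℝ), memB p (x - Pi.single s δ + Pi.single t δ) := by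
  have hslack (Z : Finset α) : ∀ᶠ δ in 𝓝[>] (0 : ℝ),
      s ∈ Z → t ∉ Z → p Z ≤ ((∑ u ∈ Z, x u - δ : ℝ) : EReal) := by
    by_cases hZ : s ∈ Z ∧ t ∉ Z
    · have hlt : p Z < ((∑ u ∈ Z, x u : ℝ) : EReal) :=
        (hx.2 Z).lt_of_ne fun h => hZ.2 (htight Z h hZ.1)
      have hlim : Tendsto (fun δ : ℝ => ∑ u ∈ Z, x u - δ) (𝓝[>] 0) (𝓝 (∑ u ∈ Z, x u)) :=
        ((continuous_const.sub continuous_id).tendsto' 0 _ (sub_zero _)).mono_left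
          nhdsWithin_le_nhds
      exact (((continuous_coe_real_ereal.tendsto _).comp hlim).eventually_const_lt hlt).mono
        fun δ h _ _ => h.le
    · exact Eventually.of_forall fun δ hs ht => absurd ⟨hs, ht⟩ hZ
  filter_upwards [eventually_all.2 hslack, self_mem_nhdsWithin] with δ h hδ
  exact memB_exchange hx (le_of_lt hδ) h

theorem memBZ_exchange (hint : IntegerValued p) {x : α → ℤ} (hx : memBZ p x) {s t : α}
    (htight : ∀ Z, IsTight p (fun u => (x u : ℝ)) Z → s ∈ Z → t ∈ Z) :
    memBZ p (x - Pi.single s 1 + Pi.single t 1) := by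
  rw [memBZ_iff_memB_cast] at hx ⊢
  have hcast : (fun u => ((x - Pi.single s 1 + Pi.single t 1 : α → ℤ) u : ℝ)) =
      (fun u => (x u : ℝ)) - Pi.single s 1 + Pi.single t 1 := by
    ext u
    simp [Pi.single_apply, apply_ite (Int.cast : ℤ → ℝ)]
  rw [hcast]
  refine memB_exchange hx zero_le_one fun Z hs ht => ?_
  have hlt : p Z < ((∑ u ∈ Z, (x u : ℝ) : ℝ) : EReal) :=
    (hx.2 Z).lt_of_ne fun h => ht (htight Z h hs)
  -- a non-tight set has slack at least one, as `p Z` and `x(Z)` are integers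
  obtain hbot | ⟨n, hn⟩ := hint Z
  · simp [hbot]
  · rw [hn, EReal.coe_lt_coe_iff] at hlt
    rw [hn, EReal.coe_le_coe_iff]
    have : n < ∑ u ∈ Z, x u := by exact_mod_cast hlt
    have : (n : ℝ) + 1 ≤ ∑ u ∈ Z, (x u : ℝ) := by exact_mod_cast this
    linarith

theorem IsTight.inter_union (hsup : Supermodular p) {x : α → ℝ} (hx : memB p x)
    {X Y : Finset α} (hX : IsTight p x X) (hY : IsTight p x Y) :
    IsTight p x (X ∩ Y) ∧ IsTight p x (X ∪ Y) := by
  refine EReal.eq_coe_and_eq_coe_of_coe_add_le (hx.2 _) (hx.2 _) ?_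
  calc (((∑ u ∈ X ∩ Y, x u) + ∑ u ∈ X ∪ Y, x u : ℝ) : EReal) = p X + p Y := by
        rw [hX, hY, ← EReal.coe_add, add_comm, Finset.sum_union_inter]
    _ ≤ p (X ∩ Y) + p (X ∪ Y) := hsup X Y

theorem IsTight.finset_sup (hp0 : p ∅ = 0) (hsup : Supermodular p) {x : α → ℝ}
    (hx : memB p x) {ι : Type*} {I : Finset ι} {f : ι → Finset α}
    (h : ∀ i ∈ I, IsTight p x (f i)) : IsTight p x (I.sup f) :=
  Finset.sup_induction (by simp [IsTight, hp0])
    (fun _ h₁ _ h₂ => (h₁.inter_union hsup hx h₂).2) h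

theorem sum_sdiff_le_of_isTight (hsup : Supermodular p) {u w : α → ℝ} (hu : memB p u)
    (hw : memB p w) {X Y : Finset α} (hX : IsTight p u X) (hY : IsTight p w Y) :
    ∑ i ∈ X \ Y, u i ≤ ∑ i ∈ X \ Y, w i := by
  have key : (((∑ i ∈ X, u i) + ∑ i ∈ Y, w i : ℝ) : EReal) ≤
      (((∑ i ∈ X ∩ Y, u i) + ∑ i ∈ X ∪ Y, w i : ℝ) : EReal) := by
    rw [EReal.coe_add, EReal.coe_add, ← hX, ← hY]
    exact (hsup X Y).trans (add_le_add (hu.2 _) (hw.2 _))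
  have hu_split := Finset.sum_inter_add_sum_sdiff X Y u
  have hw_split := Finset.sum_sdiff (f := w) (Finset.subset_union_right : Y ⊆ X ∪ Y)
  rw [Finset.union_sdiff_right] at hw_split
  linarith [EReal.coe_le_coe_iff.1 key]

theorem eqOn_sdiff_of_isTight (hsup : Supermodular p) {u w : α → ℝ} (hu : memB p u)
    (hw : memB p w) {X Y : Finset α} (hX : IsTight p u X) (hY : IsTight p w Y)
    (hle : ∀ i ∈ X \ Y, w i ≤ u i) : ∀ i ∈ X \ Y, w i = u i :=
  (Finset.sum_eq_sum_iff_of_le hle).1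
    ((Finset.sum_le_sum hle).antisymm (sum_sdiff_le_of_isTight hsup hu hw hX hY))

open Classical in
noncomputable def minTight (p : Finset α → EReal) (x : α → ℝ) (s : α) : Finset α :=
  (Finset.univ.filter fun Z : Finset α => IsTight p x Z ∧ s ∈ Z).inf id

open Classical in
theorem isTight_minTight (hsup : Supermodular p) {x : α → ℝ} (hx : memB p x) (s : α) :
    IsTight p x (minTight p x s) :=
  Finset.inf_induction hx.1.symm (fun _ h₁ _ h₂ => (h₁.inter_union hsup hx h₂).1)
    fun _ hZ => (Finset.mem_filter.1 hZ).2.1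

theorem mem_minTight_self {x : α → ℝ} {s : α} : s ∈ minTight p x s := by
  simp [minTight, Finset.mem_inf]

open Classical in
theorem minTight_subset {x : α → ℝ} {s : α} {Z : Finset α} (hZ : IsTight p x Z)
    (hs : s ∈ Z) : minTight p x s ⊆ Z :=
  Finset.inf_le (f := id) (Finset.mem_filter.2 ⟨Finset.mem_univ _, hZ, hs⟩)

theorem DecMinR.le_of_mem_minTight {mR : α → ℝ} (hmR : DecMinR p mR) {s t : α}
    (ht : t ∈ minTight p mR s) : mR s ≤ mR t := by
  by_contra! hts
  have hst : s ≠ t := by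
    rintro rfl
    exact hts.false
  obtain ⟨δ, hmem, hδ⟩ := ((memB_exchange_eventually hmR.1 fun Z hZ hs =>
    minTight_subset hZ hs ht).and (Ioo_mem_nhdsGT (sub_pos.2 hts))).exists
  have hlt : sortDescR (mR - Pi.single s δ + Pi.single t δ) < sortDescR mR :=
    sort_map_reverse_lt_of_exchange (s := s) (t := t) (by simp [hst, hδ.1])
      (by simp [hst.symm]; linarith [hδ.2]) hts fun u hus hut => by simp [hus, hut]
  exact ((lexLE_iff_le _ _).1 (hmR.2 _ hmem)).not_gt hlt

theorem DecMinZ.sub_one_le_of_mem_minTight (hint : IntegerValued p) {mZ : α → ℤ}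
    (hmZ : DecMinZ p mZ) {s t : α} (ht : t ∈ minTight p (fun u => (mZ u : ℝ)) s) :
    mZ s - 1 ≤ mZ t := by
  by_contra! hts
  have hst : s ≠ t := by
    rintro rfl
    omega
  have hmem := memBZ_exchange hint hmZ.1 fun Z hZ hs => minTight_subset hZ hs ht
  have hlt : sortDescZ (mZ - Pi.single s 1 + Pi.single t 1) < sortDescZ mZ :=
    sort_map_reverse_lt_of_exchange (s := s) (t := t) (by simp [hst])
      (by simp [hst.symm]; omega) (by omega) fun u hus hut => by simp [hus, hut]
  exact ((lexLE_iff_le _ _).1 (hmZ.2 _ hmem)).not_gt hlt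

theorem DecMinR.isTight_of_upward_closed (hp0 : p ∅ = 0) (hsup : Supermodular p)
    {mR : α → ℝ} (hmR : DecMinR p mR) {Z : Finset α} (hZ : ∀ u ∈ Z, ∀ v, mR u ≤ mR v → v ∈ Z) :
    IsTight p mR Z := by
  have hZ_eq : Z.sup (minTight p mR) = Z :=
    (Finset.sup_le fun u hu _ hv => hZ u hu _ (hmR.le_of_mem_minTight hv)).antisymm
      fun u hu => Finset.mem_sup.2 ⟨u, hu, mem_minTight_self⟩
  exact hZ_eq ▸ IsTight.finset_sup hp0 hsup hmR.1 fun u _ => isTight_minTight hsup hmR.1 u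

theorem DecMinZ.floor_le (hp0 : p ∅ = 0) (hsup : Supermodular p) (hint : IntegerValued p)
    {mR : α → ℝ} (hmR : DecMinR p mR) {mZ : α → ℤ} (hmZ : DecMinZ p mZ) (s : α) :
    ⌊mR s⌋ ≤ mZ s := by
  by_contra! hs
  have hmZ' := memBZ_iff_memB_cast.1 hmZ.1
  set A := ({t | ⌊mR s⌋ < mZ t} : Finset α).sup (minTight p fun u => (mZ u : ℝ))
  have hA : IsTight p (fun u => (mZ u : ℝ)) A :=
    IsTight.finset_sup hp0 hsup hmZ' fun t _ => isTight_minTight hsup hmZ' t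
  have hA_ge : ∀ u ∈ A, ⌊mR s⌋ ≤ mZ u := by
    intro u hu
    obtain ⟨t, ht, hut⟩ := Finset.mem_sup.1 hu
    have := hmZ.sub_one_le_of_mem_minTight hint hut
    simp only [Finset.mem_filter, Finset.mem_univ, true_and] at ht
    omega
  have hX : IsTight p mR {u | mR s ≤ mR u} := hmR.isTight_of_upward_closed hp0 hsup
    (by simpa using fun u hu v huv => hu.trans huv)
  have hle : ∀ i ∈ ({u | mR s ≤ mR u} : Finset α) \ A, (mZ i : ℝ) ≤ mR i := by
    intro i hi
    simp only [Finset.mem_sdiff, Finset.mem_filter, Finset.mem_univ, true_and] at hi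
    have : mZ i ≤ ⌊mR s⌋ :=
      not_lt.1 fun h => hi.2 (Finset.mem_sup.2 ⟨i, by simpa using h, mem_minTight_self⟩)
    calc (mZ i : ℝ) ≤ ⌊mR s⌋ := by exact_mod_cast this
      _ ≤ mR s := Int.floor_le _
      _ ≤ mR i := hi.1
  have hsX : s ∈ ({u | mR s ≤ mR u} : Finset α) \ A := by
    simpa using fun h => (hA_ge s h).not_gt hs
  have heq := eqOn_sdiff_of_isTight hsup hmR.1 hmZ' hX hA hle s hsX
  have : (mZ s : ℝ) < ⌊mR s⌋ := by exact_mod_cast hs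
  linarith [Int.floor_le (mR s)]

theorem DecMinZ.le_ceil (hp0 : p ∅ = 0) (hsup : Supermodular p) (hint : IntegerValued p)
    {mR : α → ℝ} (hmR : DecMinR p mR) {mZ : α → ℤ} (hmZ : DecMinZ p mZ) (s : α) :
    mZ s ≤ ⌈mR s⌉ := by
  by_contra! hs
  have hmZ' := memBZ_iff_memB_cast.1 hmZ.1
  have hY : IsTight p mR {u | mR s < mR u} := hmR.isTight_of_upward_closed hp0 hsup
    (by simpa using fun u hu v huv => hu.trans_le huv)
  set X := minTight p (fun u => (mZ u : ℝ)) s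
  have hle : ∀ i ∈ X \ ({u | mR s < mR u} : Finset α), mR i ≤ mZ i := by
    intro i hi
    simp only [Finset.mem_sdiff, Finset.mem_filter, Finset.mem_univ, true_and, not_lt] at hi
    have := hmZ.sub_one_le_of_mem_minTight hint hi.1
    calc mR i ≤ mR s := hi.2
      _ ≤ ⌈mR s⌉ := Int.le_ceil _
      _ ≤ mZ i := by exact_mod_cast (by omega : ⌈mR s⌉ ≤ mZ i)
  have hsX : s ∈ X \ ({u | mR s < mR u} : Finset α) := by
    simpa using mem_minTight_self
  have heq := eqOn_sdiff_of_isTight hsup hmZ' hmR.1 (isTight_minTight hsup hmZ' s) hY hle s hsX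
  have : (⌈mR s⌉ : ℝ) < mZ s := by exact_mod_cast hs
  linarith [Int.le_ceil (mR s)]

end BasePolyhedron

theorem decmin_proximity_floor_ceil_general (p : Finset α → EReal) (hp0 : p ∅ = 0)
    (hsup : Supermodular p)
    (hint : IntegerValued p) (mR : α → ℝ) (hmR : DecMinR p mR)
    (mZ : α → ℤ) (hmZ : DecMinZ p mZ) :
    ∀ s : α, ⌊mR s⌋ ≤ mZ s ∧ mZ s ≤ ⌈mR s⌉ := fun s =>
  ⟨hmZ.floor_le hp0 hsup hint hmR s, hmZ.le_ceil hp0 hsup hint hmR s⟩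

/-- Proximity: every dec-min element `m_ℤ` of the M-convex set `B ∩ ℤ^S` satisfies
`⌊m_ℝ⌋ ≤ m_ℤ ≤ ⌈m_ℝ⌉`, where `m_ℝ` is the (unique) dec-min element of the
integral base-polyhedron `B`. -/
theorem decmin_proximity_floor_ceil (p : Finset α → EReal) (hp0 : p ∅ = 0)
    (hfin : p (Finset.univ : Finset α) ≠ ⊥) (hsup : Supermodular p)
    (hint : IntegerValued p) (mR : α → ℝ) (hmR : DecMinR p mR)
    (mZ : α → ℤ) (hmZ : DecMinZ p mZ) :
    ∀ s : α, ⌊mR s⌋ ≤ mZ s ∧ mZ s ≤ ⌈mR s⌉ :=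
  decmin_proximity_floor_ceil_general p hp0 hsup hint mR hmR mZ hmZ
end
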